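/- arXiv:2205.13587 — 3 statements merged into one kernel-verified Lean document; each statement's English description precedes it below -/
import Mathlib

section
/- For row-stochastic matrices A and B of size N×N, δ(AB) ≤ λ(A)·δ(B), where λ(A) = 1 − γ(A) and γ is the ergodic coefficient. -/
def RowStochastic {m n : Type*} [Fintype n] (A : Matrix m n ℝ) : Prop :=
  (∀ i j, 0 ≤ A i j) ∧ ∀ i, ∑ j, A i j = 1

noncomputable def ergCoef {N : ℕ} (P : Matrix (Fin N) (Fin N) ℝ) : ℝ :=
  ⨅ i₁, ⨅ i₂, ∑ j, min (P i₁ j) (P i₂ j)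

noncomputable def lambdaCoef {N : ℕ} (P : Matrix (Fin N) (Fin N) ℝ) : ℝ :=
  1 - ergCoef P

noncomputable def deltaCoef {N : ℕ} (P : Matrix (Fin N) (Fin N) ℝ) : ℝ :=
  ⨆ j, ⨆ i₁, ⨆ i₂, |P i₁ j - P i₂ j|

def Scrambling {N : ℕ} (P : Matrix (Fin N) (Fin N) ℝ) : Prop :=
  0 < ergCoef P

theorem stmt_8 {N : ℕ} (A B : Matrix (Fin N) (Fin N) ℝ)
    (hA : RowStochastic A) (hB : RowStochastic B) :
    deltaCoef (A * B) ≤ lambdaCoef A * deltaCoef B := by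
  rcases Nat.eq_zero_or_pos N with h0 | hpos
  · subst h0
    simp [deltaCoef, lambdaCoef, ergCoef, Real.iSup_of_isEmpty, Real.iInf_of_isEmpty]
  · haveI : Nonempty (Fin N) := Fin.pos_iff_nonempty.mp hpos
    have hBdd : ∀ f : Fin N → ℝ, BddAbove (Set.range f) := fun f => (Set.finite_range f).bddAbove
    have hBddB : ∀ f : Fin N → ℝ, BddBelow (Set.range f) := fun f => (Set.finite_range f).bddBelow
    have habs : ∀ (j k₁ k₂ : Fin N), |B k₁ j - B k₂ j| ≤ deltaCoef B := by
      intro j k₁ k₂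
      unfold deltaCoef
      calc |B k₁ j - B k₂ j| ≤ ⨆ i₂, |B k₁ j - B i₂ j| := le_ciSup (f := fun i₂ => |B k₁ j - B i₂ j|) (hBdd _) k₂
        _ ≤ ⨆ i₁, ⨆ i₂, |B i₁ j - B i₂ j| := le_ciSup (f := fun i₁ => ⨆ i₂, |B i₁ j - B i₂ j|) (hBdd _) k₁
        _ ≤ ⨆ j', ⨆ i₁, ⨆ i₂, |B i₁ j' - B i₂ j'| := le_ciSup (f := fun j' => ⨆ i₁, ⨆ i₂, |B i₁ j' - B i₂ j'|) (hBdd _) j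
    have hδB : 0 ≤ deltaCoef B := by
      have := habs (Classical.arbitrary _) (Classical.arbitrary _) (Classical.arbitrary _)
      exact le_trans (abs_nonneg _) this
    have hγ : ∀ i₁ i₂ : Fin N, ergCoef A ≤ ∑ k, min (A i₁ k) (A i₂ k) := by
      intro i₁ i₂
      calc ergCoef A ≤ ⨅ i₂', ∑ k, min (A i₁ k) (A i₂' k) := ciInf_le (hBddB _) i₁
        _ ≤ ∑ k, min (A i₁ k) (A i₂ k) := ciInf_le (hBddB _) i₂
    have key : ∀ i₁ i₂ (j : Fin N), (A * B) i₁ j - (A * B) i₂ j ≤ lambdaCoef A * deltaCoef B := by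
      intro i₁ i₂ j
      set d : Fin N → ℝ := fun k => A i₁ k - A i₂ k with hd
      set p : Fin N → ℝ := fun k => max (d k) 0 with hp
      set q : Fin N → ℝ := fun k => max (-(d k)) 0 with hq
      have hpq : ∀ k, d k = p k - q k := fun k => (max_zero_sub_max_neg_zero_eq_self (d k)).symm
      have hp0 : ∀ k, 0 ≤ p k := fun k => le_max_right _ _
      have hq0 : ∀ k, 0 ≤ q k := fun k => le_max_right _ _
      have hsumd : ∑ k, d k = 0 := by
        simp only [hd, Finset.sum_sub_distrib, hA.2 i₁, hA.2 i₂, sub_self]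
      have hsumpq : ∑ k, p k = ∑ k, q k := by
        have h : ∑ k, (p k - q k) = (0:ℝ) := by
          rw [← hsumd]; exact Finset.sum_congr rfl fun k _ => (hpq k).symm
        rw [Finset.sum_sub_distrib] at h; linarith
      have hmin : ∀ k, min (A i₁ k) (A i₂ k) = A i₁ k - p k := by
        intro k
        simp only [hp, hd]
        rcases le_total (A i₁ k) (A i₂ k) with h | h
        · rw [min_eq_left h, max_eq_right (by linarith)]; ring
        · rw [min_eq_right h, max_eq_left (by linarith)]; ring
      have hsmin : ∑ k, min (A i₁ k) (A i₂ k) = 1 - ∑ k, p k := by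
        rw [Finset.sum_congr rfl (fun k _ => hmin k), Finset.sum_sub_distrib, hA.2 i₁]
      have hsl : ∑ k, p k ≤ lambdaCoef A := by
        have := hγ i₁ i₂
        rw [hsmin] at this
        unfold lambdaCoef; linarith
      have hs0 : 0 ≤ ∑ k, p k := Finset.sum_nonneg fun k _ => hp0 k
      obtain ⟨kM, _, hkM⟩ := Finset.exists_max_image Finset.univ (fun k => B k j)
        Finset.univ_nonempty
      obtain ⟨km, _, hkm⟩ := Finset.exists_min_image Finset.univ (fun k => B k j)
        Finset.univ_nonempty
      have hmul : (A * B) i₁ j - (A * B) i₂ j = ∑ k, d k * B k j := by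
        simp only [Matrix.mul_apply, hd, ← Finset.sum_sub_distrib, sub_mul]
      rw [hmul]
      have h1 : ∑ k, d k * B k j = (∑ k, p k * B k j) - ∑ k, q k * B k j := by
        rw [← Finset.sum_sub_distrib]
        exact Finset.sum_congr rfl fun k _ => by rw [hpq k]; ring
      rw [h1]
      have h2 : ∑ k, p k * B k j ≤ (∑ k, p k) * B kM j := by
        rw [Finset.sum_mul]
        exact Finset.sum_le_sum fun k _ =>
          mul_le_mul_of_nonneg_left (hkM k (Finset.mem_univ k)) (hp0 k)
      have h3 : (∑ k, q k) * B km j ≤ ∑ k, q k * B k j := by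
        rw [Finset.sum_mul]
        exact Finset.sum_le_sum fun k _ =>
          mul_le_mul_of_nonneg_left (hkm k (Finset.mem_univ k)) (hq0 k)
      have h4 : (∑ k, p k) * B kM j - (∑ k, q k) * B km j
          = (∑ k, p k) * (B kM j - B km j) := by
        rw [hsumpq]; ring
      have h5 : B kM j - B km j ≤ deltaCoef B :=
        le_trans (le_abs_self _) (habs j kM km)
      have h6 : 0 ≤ B kM j - B km j := by
        have := hkm kM (Finset.mem_univ kM); linarith
      calc (∑ k, p k * B k j) - ∑ k, q k * B k j
          ≤ (∑ k, p k) * B kM j - (∑ k, q k) * B km j := by linarith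
        _ = (∑ k, p k) * (B kM j - B km j) := h4
        _ ≤ lambdaCoef A * deltaCoef B := mul_le_mul hsl h5 h6 (le_trans hs0 hsl)
    unfold deltaCoef
    refine ciSup_le fun j => ciSup_le fun i₁ => ciSup_le fun i₂ => ?_
    rw [abs_sub_le_iff]
    exact ⟨key i₁ i₂ j, key i₂ i₁ j⟩
end

section
/- If A₁, A₂, …, Aₙ are row-stochastic N×N matrices each with λ(Aᵢ) ≤ c for some c < 1, then δ(A₁A₂⋯Aₙ) ≤ cⁿ⁻¹·δ(Aₙ) ≤ cⁿ⁻¹, and hence the rows of the product A₁⋯Aₙ become uniformly close to each other as n → ∞. -/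
/-!
Write rows `i₁`, `i₂` of `P` as `m + g` and `m + h`, where `m = min(P i₁, P i₂)` is their common
part. Then `g` and `h` are nonnegative with the same mass `1 - ∑ m ≤ λ(P)`, so entry `j` of the
difference of rows `i₁`, `i₂` of `P * Q`, namely `∑ₖ (g k - h k) Q k j`, is at most that mass times
the oscillation of column `j` of `Q`. Hence `δ(P Q) ≤ λ(P) δ(Q)`; peeling off the factors
`A₀, …, A_{n-2}` one at a time gives the factor `cⁿ⁻¹`, and `δ ≤ 1` for stochastic matrices gives
the second bound.
-/

open Finset

theorem sum_mul_sub_sum_mul_le {ι : Type*} [Fintype ι] [Nonempty ι] {g h x : ι → ℝ} {s d : ℝ}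
    (hg : ∀ k, 0 ≤ g k) (hh : ∀ k, 0 ≤ h k) (hgs : ∑ k, g k = s) (hhs : ∑ k, h k = s)
    (hx : ∀ k k', x k - x k' ≤ d) :
    ∑ k, g k * x k - ∑ k, h k * x k ≤ s * d := by
  obtain ⟨kmax, hkmax⟩ := Finite.exists_max x
  obtain ⟨kmin, hkmin⟩ := Finite.exists_min x
  have hs : 0 ≤ s := hgs ▸ sum_nonneg fun k _ => hg k
  have upper : ∑ k, g k * x k ≤ s * x kmax := by
    rw [← hgs, sum_mul]
    exact sum_le_sum fun k _ => mul_le_mul_of_nonneg_left (hkmax k) (hg k)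
  have lower : s * x kmin ≤ ∑ k, h k * x k := by
    rw [← hhs, sum_mul]
    exact sum_le_sum fun k _ => mul_le_mul_of_nonneg_left (hkmin k) (hh k)
  linarith [mul_le_mul_of_nonneg_left (hx kmax kmin) hs]

variable {N : ℕ}

theorem RowStochastic.le_one {P : Matrix (Fin N) (Fin N) ℝ} (hP : RowStochastic P)
    (i j : Fin N) : P i j ≤ 1 :=
  hP.2 i ▸ single_le_sum (fun k _ => hP.1 i k) (mem_univ j)

theorem RowStochastic.abs_sub_le_one {P : Matrix (Fin N) (Fin N) ℝ} (hP : RowStochastic P)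
    (i₁ i₂ j : Fin N) : |P i₁ j - P i₂ j| ≤ 1 :=
  abs_sub_le_iff.2
    ⟨by linarith [hP.le_one i₁ j, hP.1 i₂ j], by linarith [hP.le_one i₂ j, hP.1 i₁ j]⟩

theorem ergCoef_le (P : Matrix (Fin N) (Fin N) ℝ) (i₁ i₂ : Fin N) :
    ergCoef P ≤ ∑ j, min (P i₁ j) (P i₂ j) :=
  ciInf_le_of_le (Set.finite_range _).bddBelow i₁ (ciInf_le (Set.finite_range _).bddBelow i₂)

theorem RowStochastic.lambdaCoef_nonneg {P : Matrix (Fin N) (Fin N) ℝ} (hP : RowStochastic P) :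
    0 ≤ lambdaCoef P := by
  rw [lambdaCoef, sub_nonneg]
  rcases isEmpty_or_nonempty (Fin N) with _ | ⟨⟨i⟩⟩
  · simp [ergCoef, Real.iInf_of_isEmpty]
  · simpa [hP.2 i] using ergCoef_le P i i

theorem le_deltaCoef (P : Matrix (Fin N) (Fin N) ℝ) (j i₁ i₂ : Fin N) :
    |P i₁ j - P i₂ j| ≤ deltaCoef P :=
  le_ciSup_of_le (Set.finite_range _).bddAbove j <|
    le_ciSup_of_le (Set.finite_range _).bddAbove i₁ <|
      le_ciSup (f := fun i₂ => |P i₁ j - P i₂ j|) (Set.finite_range _).bddAbove i₂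

theorem deltaCoef_nonneg (P : Matrix (Fin N) (Fin N) ℝ) : 0 ≤ deltaCoef P :=
  Real.iSup_nonneg fun _ => Real.iSup_nonneg fun _ => Real.iSup_nonneg fun _ => abs_nonneg _

theorem deltaCoef_le {P : Matrix (Fin N) (Fin N) ℝ} {C : ℝ} (hC : 0 ≤ C)
    (h : ∀ j i₁ i₂, |P i₁ j - P i₂ j| ≤ C) : deltaCoef P ≤ C :=
  Real.iSup_le (fun j => Real.iSup_le (fun i₁ => Real.iSup_le (h j i₁) hC) hC) hC

theorem RowStochastic.deltaCoef_le_one {P : Matrix (Fin N) (Fin N) ℝ} (hP : RowStochastic P) :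
    deltaCoef P ≤ 1 :=
  deltaCoef_le zero_le_one fun j i₁ i₂ => hP.abs_sub_le_one i₁ i₂ j

theorem RowStochastic.mul_apply_sub_mul_apply_le {P : Matrix (Fin N) (Fin N) ℝ}
    (hP : RowStochastic P) (Q : Matrix (Fin N) (Fin N) ℝ) (i₁ i₂ j : Fin N) :
    (P * Q) i₁ j - (P * Q) i₂ j ≤ (1 - ∑ k, min (P i₁ k) (P i₂ k)) * deltaCoef Q := by
  have : Nonempty (Fin N) := ⟨j⟩
  set m : Fin N → ℝ := fun k => min (P i₁ k) (P i₂ k)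
  have hdiff : (P * Q) i₁ j - (P * Q) i₂ j
      = ∑ k, (P i₁ k - m k) * Q k j - ∑ k, (P i₂ k - m k) * Q k j := by
    simp only [Matrix.mul_apply, ← sum_sub_distrib]
    exact sum_congr rfl fun k _ => by ring
  have hmass (i : Fin N) : ∑ k, (P i k - m k) = 1 - ∑ k, m k := by
    rw [sum_sub_distrib, hP.2 i]
  rw [hdiff]
  exact sum_mul_sub_sum_mul_le (fun k => sub_nonneg.2 (min_le_left _ _))
    (fun k => sub_nonneg.2 (min_le_right _ _)) (hmass i₁) (hmass i₂)
    fun k k' => (le_abs_self _).trans (le_deltaCoef Q j k k')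

theorem RowStochastic.deltaCoef_mul_le {P : Matrix (Fin N) (Fin N) ℝ} (hP : RowStochastic P)
    (Q : Matrix (Fin N) (Fin N) ℝ) : deltaCoef (P * Q) ≤ lambdaCoef P * deltaCoef Q := by
  have hrow (i₁ i₂ j : Fin N) : (P * Q) i₁ j - (P * Q) i₂ j ≤ lambdaCoef P * deltaCoef Q :=
    (hP.mul_apply_sub_mul_apply_le Q i₁ i₂ j).trans <| mul_le_mul_of_nonneg_right
      (by rw [lambdaCoef]; linarith [ergCoef_le P i₁ i₂])
      (deltaCoef_nonneg Q)
  exact deltaCoef_le (mul_nonneg hP.lambdaCoef_nonneg (deltaCoef_nonneg Q))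
    fun j i₁ i₂ => abs_sub_le_iff.2 ⟨hrow i₁ i₂ j, hrow i₂ i₁ j⟩

theorem deltaCoef_list_prod_mul_le {c : ℝ} (hc : 0 ≤ c) {L : List (Matrix (Fin N) (Fin N) ℝ)}
    (hL : ∀ M ∈ L, RowStochastic M) (hLc : ∀ M ∈ L, lambdaCoef M ≤ c)
    (Q : Matrix (Fin N) (Fin N) ℝ) :
    deltaCoef (L.prod * Q) ≤ c ^ L.length * deltaCoef Q := by
  induction L with
  | nil => simp
  | cons M L ih =>
    have ih := ih (fun M' hM' => hL M' (List.mem_cons_of_mem M hM'))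
      (fun M' hM' => hLc M' (List.mem_cons_of_mem M hM'))
    calc deltaCoef ((M :: L).prod * Q)
        = deltaCoef (M * (L.prod * Q)) := by rw [List.prod_cons, mul_assoc]
      _ ≤ lambdaCoef M * deltaCoef (L.prod * Q) :=
        (hL M List.mem_cons_self).deltaCoef_mul_le _
      _ ≤ c * (c ^ L.length * deltaCoef Q) :=
        mul_le_mul (hLc M List.mem_cons_self) ih (deltaCoef_nonneg _) hc
      _ = c ^ (M :: L).length * deltaCoef Q := by rw [List.length_cons, pow_succ']; ring

theorem stmt_9_general {N : ℕ} (c : ℝ) (hc0 : 0 ≤ c)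
    (A : ℕ → Matrix (Fin N) (Fin N) ℝ)
    (hA : ∀ i, RowStochastic (A i)) (hlam : ∀ i, lambdaCoef (A i) ≤ c)
    (n : ℕ) (hn : 1 ≤ n) :
    deltaCoef (((List.range n).map A).prod) ≤ c ^ (n - 1) * deltaCoef (A (n - 1)) ∧
    deltaCoef (((List.range n).map A).prod) ≤ c ^ (n - 1) := by
  obtain ⟨m, rfl⟩ : ∃ m, n = m + 1 := ⟨n - 1, by omega⟩
  have hprod : ((List.range (m + 1)).map A).prod = ((List.range m).map A).prod * A m := by
    simp [List.range_succ]
  have h := deltaCoef_list_prod_mul_le hc0 (L := (List.range m).map A)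
    (by simp [hA]) (by simp [hlam]) (A m)
  rw [List.length_map, List.length_range, ← hprod] at h
  rw [Nat.add_sub_cancel]
  exact ⟨h, h.trans (mul_le_of_le_one_right (pow_nonneg hc0 m) (hA m).deltaCoef_le_one)⟩

theorem stmt_9 {N : ℕ} (c : ℝ) (hc0 : 0 ≤ c) (hc1 : c < 1)
    (A : ℕ → Matrix (Fin N) (Fin N) ℝ)
    (hA : ∀ i, RowStochastic (A i)) (hlam : ∀ i, lambdaCoef (A i) ≤ c)
    (n : ℕ) (hn : 1 ≤ n) :
    deltaCoef (((List.range n).map A).prod) ≤ c ^ (n - 1) * deltaCoef (A (n - 1)) ∧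
    deltaCoef (((List.range n).map A).prod) ≤ c ^ (n - 1) :=
  stmt_9_general c hc0 A hA hlam n hn
end

section
/- Let P be an r×r row-stochastic matrix whose powers P^n converge to a rank-one matrix with common row ρ, let H be an s×s row-stochastic matrix whose powers H^n converge (not necessarily rank-one), and let M be r×s row-stochastic. Then lim_{n→∞} P^n M H^n exists and has all rows equal to ρ·M·H^∞, where H^∞ = lim H^n; in particular the society converges to a single shared belief distribution depending on P, M, and H. -/
open Filter

theorem stmt_18 {r s : ℕ} (P : Matrix (Fin r) (Fin r) ℝ) (H : Matrix (Fin s) (Fin s) ℝ)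
    (M : Matrix (Fin r) (Fin s) ℝ)
    (hP : RowStochastic P) (hH : RowStochastic H) (hM : RowStochastic M)
    (ρ : Fin r → ℝ) (hρ0 : ∀ j, 0 ≤ ρ j) (hρ1 : ∑ j, ρ j = 1)
    (hPlim : ∀ i j, Tendsto (fun n => (P ^ n) i j) atTop (nhds (ρ j)))
    (Hinf : Matrix (Fin s) (Fin s) ℝ)
    (hHlim : ∀ k l, Tendsto (fun n => (H ^ n) k l) atTop (nhds (Hinf k l))) :
    ∀ i j, Tendsto (fun n => ((P ^ n * M * H ^ n : Matrix (Fin r) (Fin s) ℝ)) i j) atTop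
      (nhds (∑ k, ρ k * ((M * Hinf : Matrix (Fin r) (Fin s) ℝ)) k j)) := by
  intro i j
  have heq : ∀ n : ℕ, ((P ^ n * M * H ^ n : Matrix (Fin r) (Fin s) ℝ)) i j
      = ∑ l, ∑ k, (P ^ n) i k * M k l * (H ^ n) l j := by
    intro n
    simp [Matrix.mul_apply, Finset.sum_mul]
  have hval : (∑ k, ρ k * ((M * Hinf : Matrix (Fin r) (Fin s) ℝ)) k j)
      = ∑ l, ∑ k, ρ k * M k l * Hinf l j := by
    rw [Finset.sum_comm]
    simp [Matrix.mul_apply, Finset.mul_sum, mul_assoc]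
  simp only [heq, hval]
  exact tendsto_finset_sum _ fun l _ => tendsto_finset_sum _ fun k _ =>
    ((hPlim i k).mul_const (M k l)).mul (hHlim l j)
end
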